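/- arXiv:1510.05272 — 2 statements merged into one kernel-verified Lean document; each statement's English description precedes it below -/
import Mathlib

section
/- Let (X,μ) be a finite measure space with L²(X,μ) separable, endowed with a right action β : X × S → X of a group S for which μ is quasi-invariant with densities j(·,s), let {a(·,s)}_{s∈S} be a 𝕋-valued scalar cocycle, let π_a be the associated unitary representation on H = L²(X,μ), and set S₀ := {s ∈ S : x.s = x for a.e. x ∈ X}. If the linear span of {a(·,s) : s ∈ S₀} is weak-* dense in L^∞(X,μ), then any bounded operator T ∈ B(H) satisfying Tπ_a(s) = π_a(s)T for all s ∈ S₀ is a multiplication operator: T = M_ψ for some ψ ∈ L^∞(X,μ). -/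
open MeasureTheory
open scoped ENNReal

/-!
For `s ∈ S₀` quasi-invariance forces `j(·,s) = 1`, so `π_a(s)` is multiplication by `a(·,s)`.
Put `ψ = conj (T* 1)`. For every `φ` and `s ∈ S₀`,
`∫ a(·,s) ψ φ = ⟪T* 1, π_a(s) φ⟫ = ⟪1, π_a(s) T φ⟫ = ∫ a(·,s) T φ`,
so `ψ φ - T φ` is annihilated by every `a(·,s)` and vanishes by weak-* density.
Finally `‖ψ‖∞ ≤ ‖T‖`: on a set of positive measure where `‖ψ‖ ≥ c > ‖T‖`,
`T` would stretch the indicator of that set by the factor `c`.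
-/

namespace MeasureTheory

variable {X : Type*} [MeasurableSpace X] {μ : Measure X}

theorem measure_image_eq_of_ae_eq_id {f : X → X} (hf : ∀ᵐ x ∂μ, f x = x)
    (hnull : ∀ N, MeasurableSet N → μ N = 0 → μ (f '' N) = 0) (E : Set X) :
    μ (f '' E) = μ E := by
  set Z := toMeasurable μ {x | f x ≠ x}
  have hZ : μ Z = 0 := by rw [measure_toMeasurable]; exact hf
  have hfix : ∀ x ∉ Z, f x = x := fun x hx => not_not.1 fun h => hx (subset_toMeasurable μ _ h)
  apply le_antisymm
  · calc μ (f '' E) ≤ μ (E ∪ f '' Z) := by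
          refine measure_mono ?_
          rintro _ ⟨x, hxE, rfl⟩
          by_cases hx : x ∈ Z
          · exact Or.inr ⟨x, hx, rfl⟩
          · exact Or.inl (by rwa [hfix x hx])
      _ ≤ μ E := by
          rw [← add_zero (μ E), ← hnull Z (measurableSet_toMeasurable _ _) hZ]
          exact measure_union_le _ _
  · calc μ E = μ (E \ Z) := (measure_sdiff_null hZ).symm
      _ ≤ μ (f '' E) := measure_mono fun x hx => ⟨x, hx.1, hfix x hx.2⟩

theorem ae_eq_one_of_measure_image_eq_setLIntegral [SigmaFinite μ] {f : X → X} {j : X → ℝ}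
    (hj : Measurable j)
    (hfj : ∀ E, MeasurableSet E → μ (f '' E) = ∫⁻ x in E, ENNReal.ofReal (j x) ∂μ)
    (hf : ∀ᵐ x ∂μ, f x = x) : ∀ᵐ x ∂μ, j x = 1 := by
  have hnull : ∀ N, MeasurableSet N → μ N = 0 → μ (f '' N) = 0 := fun N hN h0 => by
    rw [hfj N hN, setLIntegral_measure_zero _ _ h0]
  have h : (fun x => ENNReal.ofReal (j x)) =ᵐ[μ] fun _ => 1 := by
    refine ae_eq_of_forall_setLIntegral_eq_of_sigmaFinite hj.ennreal_ofReal measurable_const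
      fun E hE _ => ?_
    rw [← hfj E hE, measure_image_eq_of_ae_eq_id hf hnull, setLIntegral_one]
  filter_upwards [h] with x hx using ENNReal.ofReal_eq_one.1 hx

variable {𝕜 : Type*} [RCLike 𝕜]
open ComplexConjugate

theorem L2.integrable_of_ae_eq_conj_mul (g u : Lp 𝕜 2 μ) {F : X → 𝕜}
    (hF : F =ᵐ[μ] fun x => conj (g x) * u x) : Integrable F μ := by
  refine (L2.integrable_inner (𝕜 := 𝕜) g u).congr ?_
  filter_upwards [hF] with x hx
  rw [hx, RCLike.inner_apply']

theorem L2.integral_eq_inner_of_ae_eq_conj_mul (g u : Lp 𝕜 2 μ) {F : X → 𝕜}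
    (hF : F =ᵐ[μ] fun x => conj (g x) * u x) : ∫ x, F x ∂μ = inner 𝕜 g u := by
  rw [L2.inner_def, integral_congr_ae hF]
  simp only [RCLike.inner_apply']

variable [IsFiniteMeasure μ]

theorem measure_eq_zero_of_opNorm_lt_of_le_norm {p : ℝ≥0∞} [Fact (1 ≤ p)]
    {T : Lp 𝕜 p μ →L[𝕜] Lp 𝕜 p μ} {ψ : X → 𝕜}
    (hT : ∀ φ : Lp 𝕜 p μ, T φ =ᵐ[μ] fun x => ψ x * φ x) {E : Set X} (hE : MeasurableSet E)
    {c : ℝ} (hc : ‖T‖ < c) (hψ : ∀ x ∈ E, c ≤ ‖ψ x‖) : μ E = 0 := by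
  by_contra hE₀
  set φ := indicatorConstLp p hE (measure_ne_top μ E) (1 : 𝕜)
  have hφ : 0 < ‖φ‖ := by
    rw [norm_indicatorConstLp' (zero_lt_one.trans_le Fact.out).ne' hE₀]
    simp only [norm_one, one_mul]
    exact Real.rpow_pos_of_pos (ENNReal.toReal_pos hE₀ (measure_ne_top μ E)) _
  have hlower : c * ‖φ‖ ≤ ‖T φ‖ := by
    have hc₀ : 0 ≤ c := (norm_nonneg T).trans hc.le
    calc c * ‖φ‖ = ‖(c : 𝕜) • φ‖ := by rw [norm_smul, RCLike.norm_ofReal, abs_of_nonneg hc₀]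
      _ ≤ ‖T φ‖ := by
        refine Lp.norm_le_norm_of_ae_le ?_
        filter_upwards [Lp.coeFn_smul (c : 𝕜) φ, hT φ, (indicatorConstLp_coeFn : φ =ᵐ[μ] _)]
          with x hcφ hTφ hφx
        rw [hcφ, hTφ, Pi.smul_apply, hφx]
        by_cases hx : x ∈ E
        · simp [hx, abs_of_nonneg hc₀, hψ x hx]
        · simp [hx]
  exact hc.not_ge (le_of_mul_le_mul_right (hlower.trans (T.le_opNorm φ)) hφ)

theorem ae_norm_le_opNorm_of_eq_mul {p : ℝ≥0∞} [Fact (1 ≤ p)]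
    {T : Lp 𝕜 p μ →L[𝕜] Lp 𝕜 p μ} {ψ : X → 𝕜} (hψ : AEStronglyMeasurable ψ μ)
    (hT : ∀ φ : Lp 𝕜 p μ, T φ =ᵐ[μ] fun x => ψ x * φ x) : ∀ᵐ x ∂μ, ‖ψ x‖ ≤ ‖T‖ := by
  have hT' : ∀ φ : Lp 𝕜 p μ, T φ =ᵐ[μ] fun x => hψ.mk ψ x * φ x := fun φ => by
    filter_upwards [hT φ, hψ.ae_eq_mk] with x hx hψx
    rw [hx, hψx]
  have hmk : ∀ᵐ x ∂μ, ‖hψ.mk ψ x‖ ≤ ‖T‖ :=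
    (ae_le_const_iff_forall_gt_measure_zero _ _).2 fun c hc =>
      measure_eq_zero_of_opNorm_lt_of_le_norm hT'
        (measurableSet_le measurable_const hψ.stronglyMeasurable_mk.norm.measurable) hc
        fun _ hx => hx
  filter_upwards [hmk, hψ.ae_eq_mk] with x hx hψx
  rwa [hψx]

theorem exists_coeFn_eq_mul_of_commute {ι : Type*} (f : ι → X → 𝕜)
    (M : ι → Lp 𝕜 2 μ →L[𝕜] Lp 𝕜 2 μ)
    (hM : ∀ i (φ : Lp 𝕜 2 μ), M i φ =ᵐ[μ] fun x => f i x * φ x)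
    (hf : ∀ g : X → 𝕜, Integrable g μ → (∀ i, ∫ x, f i x * g x ∂μ = 0) → g =ᵐ[μ] 0)
    (T : Lp 𝕜 2 μ →L[𝕜] Lp 𝕜 2 μ) (hT : ∀ i, Commute T (M i)) :
    ∃ ψ : X → 𝕜, AEStronglyMeasurable ψ μ ∧ ∀ φ : Lp 𝕜 2 μ, T φ =ᵐ[μ] fun x => ψ x * φ x := by
  set one : Lp 𝕜 2 μ := Lp.const 2 μ 1
  set ζ := T.adjoint one
  refine ⟨fun x => conj (ζ x), (Lp.aestronglyMeasurable ζ).star, fun φ => ?_⟩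
  have hone : ∀ᵐ x ∂μ, one x = 1 := Lp.coeFn_const 2 μ 1
  have hζφ : ∀ i, (fun x => f i x * (conj (ζ x) * φ x)) =ᵐ[μ] fun x => conj (ζ x) * M i φ x :=
    fun i => by filter_upwards [hM i φ] with x hx; rw [hx]; ring
  have hTφ : ∀ i, (fun x => f i x * T φ x) =ᵐ[μ] fun x => conj (one x) * M i (T φ) x :=
    fun i => by filter_upwards [hM i (T φ), hone] with x hx h1; rw [hx, h1, map_one, one_mul]
  have hTφ_int : Integrable (T φ) μ := (Lp.memLp (T φ)).integrable one_le_two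
  suffices (fun x => conj (ζ x) * φ x - T φ x) =ᵐ[μ] 0 by
    filter_upwards [this] with x hx
    exact (sub_eq_zero.1 hx).symm
  refine hf _ ((L2.integrable_of_ae_eq_conj_mul ζ φ (by rfl)).sub hTφ_int) fun i => ?_
  calc ∫ x, f i x * (conj (ζ x) * φ x - T φ x) ∂μ
      = ∫ x, f i x * (conj (ζ x) * φ x) ∂μ - ∫ x, f i x * T φ x ∂μ := by
        simp only [mul_sub]
        exact integral_sub (L2.integrable_of_ae_eq_conj_mul _ _ (hζφ i))
          (L2.integrable_of_ae_eq_conj_mul _ _ (hTφ i))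
    _ = inner 𝕜 ζ (M i φ) - inner 𝕜 one (M i (T φ)) := by
        rw [L2.integral_eq_inner_of_ae_eq_conj_mul _ _ (hζφ i),
          L2.integral_eq_inner_of_ae_eq_conj_mul _ _ (hTφ i)]
    _ = 0 := by
        rw [ContinuousLinearMap.adjoint_inner_left,
          show T (M i φ) = M i (T φ) from congrArg (· φ) (hT i).eq, sub_self]

end MeasureTheory

theorem stmt7_general {X : Type*} [MeasurableSpace X] (μ : Measure X) [IsFiniteMeasure μ]
    {S : Type*} (β : S → X → X)
    (j : X → S → ℝ)
    (hjmeas : ∀ s, Measurable fun x => j x s)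
    (hquasi : ∀ s, ∀ E : Set X, MeasurableSet E →
      μ (β s '' E) = ∫⁻ x in E, ENNReal.ofReal (j x s) ∂μ)
    (a : X → S → ℂ)
    (π : S → Lp ℂ 2 μ →L[ℂ] Lp ℂ 2 μ)
    (hπ : ∀ s (φ : Lp ℂ 2 μ), ⇑(π s φ) =ᵐ[μ]
      fun x => (Real.sqrt (j x s) : ℂ) * a x s * φ (β s x))
    -- weak-* density of the span of `{a(·,s) : s ∈ S₀}` in `L^∞(X,μ)`:
    (hdense : ∀ ψ : X → ℂ, Integrable ψ μ →
      (∀ s : S, (∀ᵐ x ∂μ, β s x = x) → ∫ x, a x s * ψ x ∂μ = 0) → ψ =ᵐ[μ] 0) :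
    ∀ T : Lp ℂ 2 μ →L[ℂ] Lp ℂ 2 μ,
      (∀ s : S, (∀ᵐ x ∂μ, β s x = x) → T.comp (π s) = (π s).comp T) →
      ∃ ψ : X → ℂ, MemLp ψ ⊤ μ ∧
        ∀ φ : Lp ℂ 2 μ, ⇑(T φ) =ᵐ[μ] fun x => ψ x * φ x := by
  intro T hT
  let S₀ := {s : S // ∀ᵐ x ∂μ, β s x = x}
  have hπ₀ : ∀ (s : S₀) (φ : Lp ℂ 2 μ), π s φ =ᵐ[μ] fun x => a x s * φ x := by
    rintro ⟨s, hs⟩ φ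
    filter_upwards [hπ s φ, hs,
      ae_eq_one_of_measure_image_eq_setLIntegral (hjmeas s) (hquasi s) hs] with x hπx hx hjx
    simp [hπx, hx, hjx]
  obtain ⟨ψ, hψ, hTψ⟩ := exists_coeFn_eq_mul_of_commute (fun (s : S₀) x => a x s) (π ·) hπ₀
    (fun g hg h => hdense g hg fun s hs => h ⟨s, hs⟩) T fun s => hT s s.2
  exact ⟨ψ, memLp_top_of_bound hψ ‖T‖ (ae_norm_le_opNorm_of_eq_mul hψ hTψ), hTψ⟩

/-- Let `(X,μ)` be a finite measure space with `L²(X,μ)` separable, endowed with a right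
action `β` of a group `S` with quasi-invariant measure (densities `j(·,s)`), let `a(·,s)`
be a unit-circle-valued scalar cocycle and `π_a` the associated unitary representation on
`L²(X,μ)`, and let `S₀ = {s ∈ S : x.s = x for a.e. x}`. If the linear span of
`{a(·,s) : s ∈ S₀}` is weak-* dense in `L^∞(X,μ)` (expressed, via Hahn–Banach and the
duality `L^∞ = (L¹)^*`, as: every `ψ ∈ L¹(X,μ)` with `∫ a(·,s) ψ dμ = 0` for all `s ∈ S₀`
vanishes a.e.), then every bounded operator `T` on `L²(X,μ)` commuting with `π_a(s)` for
all `s ∈ S₀` is a multiplication operator `M_ψ` for some `ψ ∈ L^∞(X,μ)`. -/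
theorem stmt7 {X : Type*} [MeasurableSpace X] (μ : Measure X) [IsFiniteMeasure μ]
    [TopologicalSpace.SeparableSpace (Lp ℂ 2 μ)]
    {S : Type*} [Group S] (β : S → X → X)
    (hβmeas : ∀ s, Measurable (β s))
    (hβone : ∀ x, β 1 x = x)
    (hβmul : ∀ s₁ s₂ : S, ∀ x, β (s₁ * s₂) x = β s₂ (β s₁ x))
    (j : X → S → ℝ)
    (hjmeas : ∀ s, Measurable fun x => j x s)
    (hjpos : ∀ s, ∀ᵐ x ∂μ, 0 < j x s)
    (hquasi : ∀ s, ∀ E : Set X, MeasurableSet E →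
      μ (β s '' E) = ∫⁻ x in E, ENNReal.ofReal (j x s) ∂μ)
    (a : X → S → ℂ)
    (hameas : ∀ s, Measurable fun x => a x s)
    (haunit : ∀ s, ∀ᵐ x ∂μ, ‖a x s‖ = 1)
    (hacoc : ∀ s₁ s₂ : S, ∀ᵐ x ∂μ, a x (s₁ * s₂) = a x s₁ * a (β s₁ x) s₂)
    (haone : ∀ᵐ x ∂μ, a x 1 = 1)
    (π : S → Lp ℂ 2 μ →L[ℂ] Lp ℂ 2 μ)
    (hπ : ∀ s (φ : Lp ℂ 2 μ), ⇑(π s φ) =ᵐ[μ]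
      fun x => (Real.sqrt (j x s) : ℂ) * a x s * φ (β s x))
    -- weak-* density of the span of `{a(·,s) : s ∈ S₀}` in `L^∞(X,μ)`:
    (hdense : ∀ ψ : X → ℂ, Integrable ψ μ →
      (∀ s : S, (∀ᵐ x ∂μ, β s x = x) → ∫ x, a x s * ψ x ∂μ = 0) → ψ =ᵐ[μ] 0) :
    ∀ T : Lp ℂ 2 μ →L[ℂ] Lp ℂ 2 μ,
      (∀ s : S, (∀ᵐ x ∂μ, β s x = x) → T.comp (π s) = (π s).comp T) →
      ∃ ψ : X → ℂ, MemLp ψ ⊤ μ ∧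
        ∀ φ : Lp ℂ 2 μ, ⇑(T φ) =ᵐ[μ] fun x => ψ x * φ x :=
  stmt7_general μ β j hjmeas hquasi a π hπ hdense
end

section
/- Let (X,μ) be a finite measure space with L²(X,μ) separable, endowed with a right action β : X × S → X of a group S for which μ is quasi-invariant with densities j(·,s), let {a(·,s)}_{s∈S} be a 𝕋-valued scalar cocycle, let π_a be the associated unitary representation on H = L²(X,μ), and set S₀ := {s ∈ S : x.s = x for a.e. x ∈ X}. If the linear span of {a(·,s) : s ∈ S₀} is weak-* dense in L^∞(X,μ), then the following are equivalent: (i) the action of S on (X,μ) is ergodic; (ii) the representation π_a is irreducible (every T ∈ B(H) commuting with all π_a(s), s ∈ S, is a scalar multiple of the identity). -/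
/-!
For `s` in the a.e. stabiliser `S₀` the density `j(·,s)` is `1` a.e., so `π_a(s)` is
multiplication by `a(·,s)`. An operator `T` commuting with all of these is multiplication by
`k = conj (T† 1)`: the integrable function `φ · conj (T† χ) - Tφ · conj χ` annihilates every
`a(·,s)`, `s ∈ S₀`, hence vanishes by the density hypothesis. Commuting with the remaining
`π_a(s)` makes `k` invariant under the action, so `k` is constant if the action is ergodic.
Conversely, multiplication by the indicator of an invariant set commutes with `π_a`; if it is a
scalar, the set is null or conull.
-/

open MeasureTheory Filter Set ComplexConjugate
open scoped ENNReal symmDiff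

structure IsRightAction {S X : Type*} [Monoid S] (β : S → X → X) : Prop where
  one_apply : ∀ x, β 1 x = x
  mul_apply : ∀ s₁ s₂ x, β (s₁ * s₂) x = β s₂ (β s₁ x)

def IsQuasiInvariantWithDensity {S X : Type*} [MeasurableSpace X] (μ : Measure X)
    (β : S → X → X) (j : X → S → ℝ) : Prop :=
  ∀ s E, MeasurableSet E → μ (β s '' E) = ∫⁻ x in E, ENNReal.ofReal (j x s) ∂μ

def IsErgodicAction {S X : Type*} [MeasurableSpace X] (μ : Measure X) (β : S → X → X) : Prop :=
  ∀ A : Set X, MeasurableSet A → (∀ s, μ (A ∆ (β s '' A)) = 0) → μ A = 0 ∨ μ Aᶜ = 0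

namespace IsRightAction

variable {S X : Type*} [Group S] {β : S → X → X}

lemma apply_inv_apply (hβ : IsRightAction β) (s : S) (x : X) : β s (β s⁻¹ x) = x := by
  rw [← hβ.mul_apply, inv_mul_cancel, hβ.one_apply]

lemma inv_apply_apply (hβ : IsRightAction β) (s : S) (x : X) : β s⁻¹ (β s x) = x := by
  simpa using hβ.apply_inv_apply s⁻¹ x

lemma image_eq_preimage_inv (hβ : IsRightAction β) (s : S) (A : Set X) :
    β s '' A = β s⁻¹ ⁻¹' A :=
  congrFun (image_eq_preimage_of_inverse (hβ.inv_apply_apply s) (hβ.apply_inv_apply s)) A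

variable [MeasurableSpace X] {μ : Measure X}

lemma forall_measure_symmDiff_image_eq_zero_iff (hβ : IsRightAction β) {A : Set X} :
    (∀ s, μ (A ∆ (β s '' A)) = 0) ↔ ∀ s, β s ⁻¹' A =ᵐ[μ] A := by
  simp only [measure_symmDiff_eq_zero_iff, hβ.image_eq_preimage_inv]
  exact ⟨fun h s => by simpa using (h s⁻¹).symm, fun h s => (h s⁻¹).symm⟩

lemma quasiMeasurePreserving {j : X → S → ℝ} (hβ : IsRightAction β)
    (hquasi : IsQuasiInvariantWithDensity μ β j) {s : S} (hmeas : Measurable (β s)) :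
    Measure.QuasiMeasurePreserving (β s) μ μ := by
  refine ⟨hmeas, Measure.AbsolutelyContinuous.mk fun E hE hE0 => ?_⟩
  rw [Measure.map_apply hmeas hE, ← inv_inv s, ← hβ.image_eq_preimage_inv, hquasi _ E hE,
    setLIntegral_measure_zero _ _ hE0]

lemma measure_image_of_ae_fixed (hβ : IsRightAction β) {s : S} (hs : ∀ᵐ x ∂μ, β s x = x)
    (E : Set X) : μ (β s '' E) = μ E := by
  have hinv : ∀ᵐ x ∂μ, β s⁻¹ x = x := hs.mono fun x hx => by
    simpa [hx] using hβ.inv_apply_apply s x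
  rw [hβ.image_eq_preimage_inv]
  exact measure_congr (hinv.mono fun x hx => by rw [mem_preimage, hx]).set_eq

lemma density_ae_eq_one_of_ae_fixed [SigmaFinite μ] {j : X → S → ℝ} (hβ : IsRightAction β)
    (hquasi : IsQuasiInvariantWithDensity μ β j) {s : S} (hj : Measurable fun x => j x s)
    (hs : ∀ᵐ x ∂μ, β s x = x) : ∀ᵐ x ∂μ, j x s = 1 := by
  have h : (fun x => ENNReal.ofReal (j x s)) =ᵐ[μ] fun _ => 1 :=
    ae_eq_of_forall_setLIntegral_eq_of_sigmaFinite (ENNReal.measurable_ofReal.comp hj)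
      measurable_const fun E hE _ => by
        rw [← hquasi s E hE, hβ.measure_image_of_ae_fixed hs, setLIntegral_one]
  exact h.mono fun x hx => ENNReal.ofReal_eq_one.mp hx

lemma ae_eq_mul_of_ae_fixed [SigmaFinite μ] {j : X → S → ℝ} (hβ : IsRightAction β)
    (hquasi : IsQuasiInvariantWithDensity μ β j) {s : S} (hj : Measurable fun x => j x s)
    (hs : ∀ᵐ x ∂μ, β s x = x) {b : X → ℂ} {U : Lp ℂ 2 μ →L[ℂ] Lp ℂ 2 μ}
    (hU : ∀ φ, ⇑(U φ) =ᵐ[μ] fun x => (Real.sqrt (j x s) : ℂ) * b x * φ (β s x)) (φ : Lp ℂ 2 μ) :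
    ⇑(U φ) =ᵐ[μ] fun x => b x * φ x := by
  filter_upwards [hU φ, hs, hβ.density_ae_eq_one_of_ae_fixed hquasi hj hs] with x h₁ h₂ h₃
  simp [h₁, h₂, h₃]

end IsRightAction

namespace IsErgodicAction

variable {S X : Type*} [Group S] {β : S → X → X} [MeasurableSpace X] {μ : Measure X}

lemma exists_ae_eq_const (herg : IsErgodicAction μ β) (hβ : IsRightAction β) {Y : Type*}
    [MeasurableSpace Y] [MeasurableSpace.CountablySeparated Y] [Nonempty Y] {g : X → Y}
    (hg : Measurable g) (hinv : ∀ s, g ∘ β s =ᵐ[μ] g) : ∃ c, g =ᵐ[μ] Function.const X c := by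
  refine exists_eventuallyEq_const_of_forall_separating MeasurableSet fun U hU => ?_
  have hUinv : ∀ s, β s ⁻¹' (g ⁻¹' U) =ᵐ[μ] g ⁻¹' U := fun s =>
    ((hinv s).mono fun x hx => by rw [mem_preimage, mem_preimage, mem_preimage, ← hx]; rfl).set_eq
  rcases herg _ (hg hU) (hβ.forall_measure_symmDiff_image_eq_zero_iff.mpr hUinv) with h | h
  · exact Or.inr (measure_eq_zero_iff_ae_notMem.mp h)
  · exact Or.inl (mem_ae_iff.mpr h)

end IsErgodicAction

section

variable {X : Type*} [MeasurableSpace X] {μ : Measure X}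

lemma measure_eq_zero_or_measure_compl_eq_zero_of_indicator_ae_eq_const {M₀ : Type*}
    [MulZeroOneClass M₀] [Nontrivial M₀] {A : Set X} {c : M₀}
    (h : A.indicator 1 =ᵐ[μ] Function.const X c) : μ A = 0 ∨ μ Aᶜ = 0 := by
  have hmem : (· = 1) ∘ A.indicator (1 : X → M₀) = A :=
    funext fun _ => propext (indicator_eq_one_iff_mem M₀)
  have hA : EventuallyConst A (ae μ) :=
    hmem ▸ (eventuallyConst_iff_exists_eventuallyEq.mpr ⟨c, h⟩).comp _
  exact (eventuallyConst_set'.mp hA).imp ae_eq_empty.mp ae_eq_univ.mp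

lemma indicatorConstLp_comp_ae_eq {E : Type*} [NormedAddCommGroup E] {p : ℝ≥0∞} {f : X → X}
    (hf : Measure.QuasiMeasurePreserving f μ μ) {A : Set X} (hA : MeasurableSet A)
    (hμA : μ A ≠ ∞) (hAf : f ⁻¹' A =ᵐ[μ] A) (c : E) :
    ⇑(indicatorConstLp p hA hμA c) ∘ f =ᵐ[μ] indicatorConstLp p hA hμA c :=
  calc _ =ᵐ[μ] (A.indicator fun _ => c) ∘ f := hf.ae_eq indicatorConstLp_coeFn
    _ = (f ⁻¹' A).indicator fun _ => c := rfl
    _ =ᵐ[μ] A.indicator fun _ => c := indicator_ae_eq_of_ae_eq_set hAf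
    _ =ᵐ[μ] _ := indicatorConstLp_coeFn.symm

lemma integrable_conj_mul (f h : Lp ℂ 2 μ) : Integrable (fun x => conj (f x) * h x) μ := by
  simpa only [RCLike.inner_apply'] using L2.integrable_inner (𝕜 := ℂ) f h

lemma inner_eq_integral_conj_mul (f h : Lp ℂ 2 μ) :
    inner ℂ f h = ∫ x, conj (f x) * h x ∂μ := by
  simp only [L2.inner_def, RCLike.inner_apply']

lemma ae_mul_conj_adjoint_eq_of_commute {ι : Type*} (g : ι → X → ℂ)
    (M : ι → Lp ℂ 2 μ →L[ℂ] Lp ℂ 2 μ) (hM : ∀ i φ, ⇑(M i φ) =ᵐ[μ] fun x => g i x * φ x)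
    (hdense : ∀ ψ : X → ℂ, Integrable ψ μ → (∀ i, ∫ x, g i x * ψ x ∂μ = 0) → ψ =ᵐ[μ] 0)
    {T : Lp ℂ 2 μ →L[ℂ] Lp ℂ 2 μ} (hT : ∀ i, T.comp (M i) = (M i).comp T) (φ χ : Lp ℂ 2 μ) :
    ∀ᵐ x ∂μ, φ x * conj ((T.adjoint χ) x) = T φ x * conj (χ x) := by
  set ψ : X → ℂ := fun x => φ x * conj ((T.adjoint χ) x) - T φ x * conj (χ x)
  have hψ : Integrable ψ μ :=
    ((integrable_conj_mul (T.adjoint χ) φ).sub (integrable_conj_mul χ (T φ))).congr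
      (ae_of_all _ fun x => by simp only [ψ, Pi.sub_apply]; ring)
  -- `∫ g i * ψ` is the difference of `⟪T† χ, M i φ⟫ = ⟪χ, T (M i φ)⟫` and `⟪χ, M i (T φ)⟫`.
  have hpair : ∀ i, ∫ x, g i x * ψ x ∂μ = 0 := fun i => by
    have hψi : (fun x => g i x * ψ x) =ᵐ[μ]
        fun x => conj ((T.adjoint χ) x) * M i φ x - conj (χ x) * M i (T φ) x := by
      filter_upwards [hM i φ, hM i (T φ)] with x h₁ h₂
      rw [h₁, h₂]
      ring
    rw [integral_congr_ae hψi, integral_sub (integrable_conj_mul _ _) (integrable_conj_mul _ _),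
      ← inner_eq_integral_conj_mul, ← inner_eq_integral_conj_mul,
      ContinuousLinearMap.adjoint_inner_left, ← ContinuousLinearMap.comp_apply, hT i,
      ContinuousLinearMap.comp_apply, sub_self]
  filter_upwards [hdense ψ hψ hpair] with x hx
  exact sub_eq_zero.mp hx

lemma exists_ae_eq_mul_of_commute [IsFiniteMeasure μ] {ι : Type*} (g : ι → X → ℂ)
    (M : ι → Lp ℂ 2 μ →L[ℂ] Lp ℂ 2 μ) (hM : ∀ i φ, ⇑(M i φ) =ᵐ[μ] fun x => g i x * φ x)
    (hdense : ∀ ψ : X → ℂ, Integrable ψ μ → (∀ i, ∫ x, g i x * ψ x ∂μ = 0) → ψ =ᵐ[μ] 0)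
    {T : Lp ℂ 2 μ →L[ℂ] Lp ℂ 2 μ} (hT : ∀ i, T.comp (M i) = (M i).comp T) :
    ∃ k : X → ℂ, Measurable k ∧ ∀ φ, ⇑(T φ) =ᵐ[μ] fun x => k x * φ x := by
  set one : Lp ℂ 2 μ := Lp.const 2 μ (1 : ℂ)
  have hone : ⇑one =ᵐ[μ] Function.const X 1 := Lp.coeFn_const 2 μ (1 : ℂ)
  have hk : AEMeasurable (fun x => conj ((T.adjoint one) x)) μ :=
    Complex.continuous_conj.measurable.comp_aemeasurable (Lp.aestronglyMeasurable _).aemeasurable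
  refine ⟨hk.mk, hk.measurable_mk, fun φ => ?_⟩
  filter_upwards [ae_mul_conj_adjoint_eq_of_commute g M hM hdense hT φ one, hone, hk.ae_eq_mk]
    with x hx h₁ hkx
  simpa [h₁, ← hkx, mul_comm] using hx.symm

lemma eq_smul_id_of_ae_eq_mul {T : Lp ℂ 2 μ →L[ℂ] Lp ℂ 2 μ} {k : X → ℂ}
    (hT : ∀ φ, ⇑(T φ) =ᵐ[μ] fun x => k x * φ x) {c : ℂ} (hk : k =ᵐ[μ] Function.const X c) :
    T = c • ContinuousLinearMap.id ℂ (Lp ℂ 2 μ) := by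
  refine ContinuousLinearMap.ext fun φ => Lp.ext ?_
  filter_upwards [hT φ, hk, Lp.coeFn_smul c φ] with x h₁ h₂ h₃
  simp [h₁, h₂, h₃]

lemma comp_ae_eq_of_commute_weightedComp [IsFiniteMeasure μ] {f : X → X}
    (hf : Measure.QuasiMeasurePreserving f μ μ) {w : X → ℂ} (hw : ∀ᵐ x ∂μ, w x ≠ 0)
    {U T : Lp ℂ 2 μ →L[ℂ] Lp ℂ 2 μ} (hU : ∀ φ, ⇑(U φ) =ᵐ[μ] fun x => w x * φ (f x))
    {k : X → ℂ} (hT : ∀ φ, ⇑(T φ) =ᵐ[μ] fun x => k x * φ x) (hcomm : T.comp U = U.comp T) :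
    k ∘ f =ᵐ[μ] k := by
  set one : Lp ℂ 2 μ := Lp.const 2 μ (1 : ℂ)
  have hone : ⇑one =ᵐ[μ] Function.const X 1 := Lp.coeFn_const 2 μ (1 : ℂ)
  have hTU : T (U one) = U (T one) := congr($hcomm one)
  filter_upwards [hT (U one), hU one, hU (T one), hf.ae (hT one), hf.ae hone, hw]
    with x h₁ h₂ h₃ h₄ h₅ hwx
  have hx : (T (U one) : X → ℂ) x = (U (T one) : X → ℂ) x := by rw [hTU]
  rw [h₁, h₂, h₃, h₄, h₅, Function.const_apply, mul_one, mul_one] at hx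
  exact mul_left_cancel₀ hwx (by rw [Function.comp_apply]; linear_combination -hx)

noncomputable def mulOperator (g : Lp ℂ ∞ μ) : Lp ℂ 2 μ →L[ℂ] Lp ℂ 2 μ :=
  (ContinuousLinearMap.mul ℂ ℂ).holderL μ ∞ 2 2 g

lemma coeFn_mulOperator (g : Lp ℂ ∞ μ) (φ : Lp ℂ 2 μ) :
    ⇑(mulOperator g φ) =ᵐ[μ] fun x => g x * φ x :=
  (ContinuousLinearMap.mul ℂ ℂ).coeFn_holder g φ

lemma mulOperator_comp_weightedComp {f : X → X}
    (hf : Measure.QuasiMeasurePreserving f μ μ) {w : X → ℂ}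
    {U : Lp ℂ 2 μ →L[ℂ] Lp ℂ 2 μ} (hU : ∀ φ, ⇑(U φ) =ᵐ[μ] fun x => w x * φ (f x))
    {g : Lp ℂ ∞ μ} (hg : ⇑g ∘ f =ᵐ[μ] g) : (mulOperator g).comp U = U.comp (mulOperator g) := by
  refine ContinuousLinearMap.ext fun φ => Lp.ext ?_
  filter_upwards [coeFn_mulOperator g (U φ), hU φ, hU (mulOperator g φ),
    hf.ae (coeFn_mulOperator g φ), hg] with x h₁ h₂ h₃ h₄ hgx
  simp only [ContinuousLinearMap.comp_apply, h₁, h₂, h₃, h₄, ← hgx, Function.comp_apply]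
  ring

lemma ae_eq_const_of_mulOperator_eq_smul_id [IsFiniteMeasure μ] {g : Lp ℂ ∞ μ} {c : ℂ}
    (h : mulOperator g = c • ContinuousLinearMap.id ℂ (Lp ℂ 2 μ)) :
    ⇑g =ᵐ[μ] Function.const X c := by
  set one : Lp ℂ 2 μ := Lp.const 2 μ (1 : ℂ)
  have hone : ⇑one =ᵐ[μ] Function.const X 1 := Lp.coeFn_const 2 μ (1 : ℂ)
  have hgone : mulOperator g one = c • one := by rw [h]; rfl
  filter_upwards [coeFn_mulOperator g one, Lp.coeFn_smul c one, hone] with x h₁ h₂ h₃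
  have hx : (mulOperator g one : X → ℂ) x = (c • one : Lp ℂ 2 μ) x := by rw [hgone]
  rw [h₁, h₂] at hx
  simpa [h₃] using hx

end

theorem stmt9_general {X : Type*} [MeasurableSpace X] (μ : Measure X) [IsFiniteMeasure μ]
    {S : Type*} [Group S] (β : S → X → X)
    (hβmeas : ∀ s, Measurable (β s))
    (hβone : ∀ x, β 1 x = x)
    (hβmul : ∀ s₁ s₂ : S, ∀ x, β (s₁ * s₂) x = β s₂ (β s₁ x))
    (j : X → S → ℝ)
    (hjmeas : ∀ s, Measurable fun x => j x s)
    (hjpos : ∀ s, ∀ᵐ x ∂μ, 0 < j x s)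
    (hquasi : ∀ s, ∀ E : Set X, MeasurableSet E →
      μ (β s '' E) = ∫⁻ x in E, ENNReal.ofReal (j x s) ∂μ)
    (a : X → S → ℂ)
    (haunit : ∀ s, ∀ᵐ x ∂μ, ‖a x s‖ = 1)
    (π : S → Lp ℂ 2 μ →L[ℂ] Lp ℂ 2 μ)
    (hπ : ∀ s (φ : Lp ℂ 2 μ), ⇑(π s φ) =ᵐ[μ]
      fun x => (Real.sqrt (j x s) : ℂ) * a x s * φ (β s x))
    -- weak-* density of the span of `{a(·,s) : s ∈ S₀}` in `L^∞(X,μ)`: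
    (hdense : ∀ ψ : X → ℂ, Integrable ψ μ →
      (∀ s : S, (∀ᵐ x ∂μ, β s x = x) → ∫ x, a x s * ψ x ∂μ = 0) → ψ =ᵐ[μ] 0) :
    ((∀ A : Set X, MeasurableSet A → (∀ s : S, μ (A ∆ (β s '' A)) = 0) →
        μ A = 0 ∨ μ Aᶜ = 0) ↔
      (∀ T : Lp ℂ 2 μ →L[ℂ] Lp ℂ 2 μ,
        (∀ s : S, T.comp (π s) = (π s).comp T) →
        ∃ c : ℂ, T = c • ContinuousLinearMap.id ℂ (Lp ℂ 2 μ))) := by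
  have hβ : IsRightAction β := ⟨hβone, hβmul⟩
  have hqmp : ∀ s, Measure.QuasiMeasurePreserving (β s) μ μ := fun s =>
    hβ.quasiMeasurePreserving hquasi (hβmeas s)
  have hweight : ∀ s, ∀ᵐ x ∂μ, (Real.sqrt (j x s) : ℂ) * a x s ≠ 0 := fun s => by
    filter_upwards [hjpos s, haunit s] with x hj ha
    exact mul_ne_zero (by simpa using (Real.sqrt_pos.mpr hj).ne')
      (norm_ne_zero_iff.mp (by simp [ha]))
  constructor
  · intro herg T hT
    obtain ⟨k, hk, hTk⟩ := exists_ae_eq_mul_of_commute (ι := {s : S // ∀ᵐ x ∂μ, β s x = x})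
      (fun s x => a x s) (fun s => π s)
      (fun s => hβ.ae_eq_mul_of_ae_fixed hquasi (hjmeas s) s.2 (hπ s))
      (fun ψ hψ h => hdense ψ hψ fun s hs => h ⟨s, hs⟩) (fun s => hT s)
    obtain ⟨c, hc⟩ := IsErgodicAction.exists_ae_eq_const herg hβ hk fun s =>
      comp_ae_eq_of_commute_weightedComp (hqmp s) (hweight s) (hπ s) hTk (hT s)
    exact ⟨c, eq_smul_id_of_ae_eq_mul hTk hc⟩
  · intro hirr A hA hAinv
    have hApre := hβ.forall_measure_symmDiff_image_eq_zero_iff.mp hAinv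
    set g := indicatorConstLp ∞ hA (measure_ne_top μ A) (1 : ℂ)
    obtain ⟨c, hc⟩ := hirr (mulOperator g) fun s => mulOperator_comp_weightedComp (hqmp s) (hπ s)
      (indicatorConstLp_comp_ae_eq (hqmp s) hA _ (hApre s) 1)
    exact measure_eq_zero_or_measure_compl_eq_zero_of_indicator_ae_eq_const
      (indicatorConstLp_coeFn.symm.trans (ae_eq_const_of_mulOperator_eq_smul_id hc))

/-- Let `(X,μ)` be a finite measure space with `L²(X,μ)` separable, endowed with a right
action `β` of a group `S` with quasi-invariant measure (densities `j(·,s)`), let `a(·,s)`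
be a unit-circle-valued scalar cocycle and `π_a` the associated unitary representation on
`L²(X,μ)`, and let `S₀ = {s ∈ S : x.s = x for a.e. x}`. If the linear span of
`{a(·,s) : s ∈ S₀}` is weak-* dense in `L^∞(X,μ)` (expressed, via Hahn–Banach and the
duality `L^∞ = (L¹)^*`, as: every `ψ ∈ L¹(X,μ)` with `∫ a(·,s) ψ dμ = 0` for all `s ∈ S₀`
vanishes a.e.), then the following are equivalent: (i) the action of `S` on `(X,μ)` is
ergodic; (ii) the representation `π_a` is irreducible, i.e. every bounded operator on
`L²(X,μ)` commuting with all `π_a(s)`, `s ∈ S`, is a scalar multiple of the identity. -/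
theorem stmt9 {X : Type*} [MeasurableSpace X] (μ : Measure X) [IsFiniteMeasure μ]
    [TopologicalSpace.SeparableSpace (Lp ℂ 2 μ)]
    {S : Type*} [Group S] (β : S → X → X)
    (hβmeas : ∀ s, Measurable (β s))
    (hβone : ∀ x, β 1 x = x)
    (hβmul : ∀ s₁ s₂ : S, ∀ x, β (s₁ * s₂) x = β s₂ (β s₁ x))
    (j : X → S → ℝ)
    (hjmeas : ∀ s, Measurable fun x => j x s)
    (hjpos : ∀ s, ∀ᵐ x ∂μ, 0 < j x s)
    (hquasi : ∀ s, ∀ E : Set X, MeasurableSet E →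
      μ (β s '' E) = ∫⁻ x in E, ENNReal.ofReal (j x s) ∂μ)
    (a : X → S → ℂ)
    (hameas : ∀ s, Measurable fun x => a x s)
    (haunit : ∀ s, ∀ᵐ x ∂μ, ‖a x s‖ = 1)
    (hacoc : ∀ s₁ s₂ : S, ∀ᵐ x ∂μ, a x (s₁ * s₂) = a x s₁ * a (β s₁ x) s₂)
    (haone : ∀ᵐ x ∂μ, a x 1 = 1)
    (π : S → Lp ℂ 2 μ →L[ℂ] Lp ℂ 2 μ)
    (hπ : ∀ s (φ : Lp ℂ 2 μ), ⇑(π s φ) =ᵐ[μ]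
      fun x => (Real.sqrt (j x s) : ℂ) * a x s * φ (β s x))
    -- weak-* density of the span of `{a(·,s) : s ∈ S₀}` in `L^∞(X,μ)`:
    (hdense : ∀ ψ : X → ℂ, Integrable ψ μ →
      (∀ s : S, (∀ᵐ x ∂μ, β s x = x) → ∫ x, a x s * ψ x ∂μ = 0) → ψ =ᵐ[μ] 0) :
    ((∀ A : Set X, MeasurableSet A → (∀ s : S, μ (A ∆ (β s '' A)) = 0) →
        μ A = 0 ∨ μ Aᶜ = 0) ↔
      (∀ T : Lp ℂ 2 μ →L[ℂ] Lp ℂ 2 μ,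
        (∀ s : S, T.comp (π s) = (π s).comp T) →
        ∃ c : ℂ, T = c • ContinuousLinearMap.id ℂ (Lp ℂ 2 μ))) :=
  stmt9_general μ β hβmeas hβone hβmul j hjmeas hjpos hquasi a haunit π hπ hdense
end
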